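/- arXiv:2108.00073 — 7 statements merged into one kernel-verified Lean document; each statement's English description precedes it below -/
import Mathlib

section
/- For every N ≥ 2, there exists a multiset of P = 4N²·log N permutations of {1,…,N} such that for every item i and every position j, the fraction of permutations in the multiset that place item i at position j is at least 1/(2N). -/
/-- For every `N ≥ 2`, there exists a multiset of `P = ⌈4 N² log N⌉` permutations of
`{1,…,N}` such that for every item `i` and position `j`, the fraction of permutations
in the multiset placing item `i` at position `j` is at least `1/(2N)`. -/
theorem stmt0 (N : ℕ) (hN : 2 ≤ N) :
    ∃ M : Multiset (Equiv.Perm (Fin N)),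
      M.card = ⌈4 * (N : ℝ) ^ 2 * Real.log N⌉₊ ∧
      ∀ i j : Fin N,
        (1 : ℝ) / (2 * N) ≤ (M.countP (fun σ => σ j = i) : ℝ) / M.card := by
  haveI : NeZero N := ⟨by omega⟩
  set P : ℕ := ⌈4 * (N : ℝ) ^ 2 * Real.log N⌉₊ with hP
  set q : ℕ := P / N with hq
  -- P ≥ 2 N²
  have hlog : (1:ℝ)/2 ≤ Real.log N := by
    have h2 : (0.6931471803 : ℝ) < Real.log 2 := Real.log_two_gt_d9
    have : Real.log 2 ≤ Real.log N := by
      apply Real.log_le_log (by norm_num)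
      exact_mod_cast hN
    linarith
  have hPbig : 2 * N ^ 2 ≤ P := by
    have h1 : ((2 * N ^ 2 : ℕ) : ℝ) ≤ 4 * (N : ℝ) ^ 2 * Real.log N := by
      push_cast
      nlinarith [sq_nonneg (N:ℝ)]
    have h2 := Nat.le_ceil (4 * (N : ℝ) ^ 2 * Real.log N)
    exact Nat.cast_le.mp (h1.trans h2)
  have hN0 : 0 < N := by omega
  have hP0 : 0 < P := by nlinarith
  have hq1 : 1 ≤ q := by
    rw [hq]
    exact Nat.one_le_div_iff hN0 |>.mpr (by nlinarith)
  have hkey : P ≤ 2 * N * q := by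
    have h1 : N * q + P % N = P := Nat.div_add_mod P N
    have h2 : P % N < N := Nat.mod_lt _ hN0
    have h3 : N ≤ N * q := Nat.le_mul_of_pos_right N hq1
    have h4 : 2 * N * q = N * q + N * q := by ring
    omega
  -- the multiset
  refine ⟨(Finset.univ.val.bind fun k : Fin N =>
      Multiset.replicate q (Equiv.addLeft k)) + Multiset.replicate (P % N) 1, ?_, ?_⟩
  · simp only [Multiset.card_add, Multiset.card_bind, Function.comp_def, Multiset.card_replicate,
      Multiset.map_const', Multiset.sum_replicate, Finset.card_univ, Fintype.card_fin,
      smul_eq_mul]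
    simpa using Nat.div_add_mod P N
  · intro i j
    set M : Multiset (Equiv.Perm (Fin N)) := (Finset.univ.val.bind fun k : Fin N =>
      Multiset.replicate q (Equiv.addLeft k)) + Multiset.replicate (P % N) 1 with hM
    have hcard : M.card = P := by
      simp only [hM, Multiset.card_add, Multiset.card_bind, Function.comp_def, Multiset.card_replicate,
        Multiset.map_const', Multiset.sum_replicate, Finset.card_univ, Fintype.card_fin,
        smul_eq_mul]
      simpa using Nat.div_add_mod P N
    have hcount : q ≤ M.countP (fun σ => σ j = i) := by
      have hle : Multiset.replicate q (Equiv.addLeft (i - j)) ≤ M := by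
        rw [hM]
        refine le_trans ?_ (Multiset.le_add_right _ _)
        exact Multiset.le_bind _ (Finset.mem_univ_val _)
      calc q = (Multiset.replicate q (Equiv.addLeft (i - j))).countP
                (fun σ => σ j = i) := by
              rw [Multiset.countP_eq_card_filter, Multiset.filter_eq_self.mpr, Multiset.card_replicate]
              intro a ha
              rw [Multiset.eq_of_mem_replicate ha]
              simp
        _ ≤ M.countP (fun σ => σ j = i) := Multiset.countP_le_of_le _ hle
    -- arithmetic
    rw [hcard]
    rw [div_le_div_iff₀ (by positivity) (by exact_mod_cast hP0)]
    have : (P : ℝ) ≤ 2 * N * q := by exact_mod_cast hkey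
    have hc : (q : ℝ) ≤ (M.countP (fun σ => σ j = i) : ℝ) := by exact_mod_cast hcount
    nlinarith [(Nat.cast_pos (α := ℝ)).mpr hN0]
end

section
/- Consider a single service j with blocking delay d ≥ 1 and a set C ⊆ {1,…,T} of forbidden time slots. If the time slots in C are removed and service j is matched periodically in the remaining slots respecting the delay constraint, then the number of matches obtained is at least ⌈(T − |C|)/d⌉. -/
lemma sep_subset (d : ℕ) (hd : 1 ≤ d) : ∀ S : Finset ℕ,
    ∃ A ⊆ S, (∀ a ∈ A, ∀ b ∈ A, a ≠ b → (d : ℤ) ≤ |(a : ℤ) - (b : ℤ)|) ∧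
      S.card ≤ d * A.card := by
  intro S
  induction S using Finset.strongInduction with
  | _ S ih =>
    rcases S.eq_empty_or_nonempty with rfl | hS
    · exact ⟨∅, by simp⟩
    · set m := S.min' hS with hm
      have hmS : m ∈ S := S.min'_mem hS
      set S' := S.filter (fun x => m + d ≤ x) with hS'
      have hsub : S' ⊂ S := by
        refine Finset.filter_ssubset.2 ⟨m, hmS, by omega⟩
      obtain ⟨A', hA'S, hsep, hcard⟩ := ih S' hsub
      have hmA' : m ∉ A' := fun h => by
        have := (Finset.mem_filter.1 (hA'S h)).2; omega
      refine ⟨insert m A', ?_, ?_, ?_⟩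
      · intro x hx
        rcases Finset.mem_insert.1 hx with rfl | hx
        · exact hmS
        · exact (Finset.filter_subset _ _) (hA'S hx)
      · intro a ha b hb hab
        have key : ∀ x ∈ A', (d : ℤ) ≤ |(x : ℤ) - (m : ℤ)| := by
          intro x hx
          have hmx := (Finset.mem_filter.1 (hA'S hx)).2
          have h : (d : ℤ) ≤ (x : ℤ) - m := by omega
          exact h.trans (le_abs_self _)
        rcases Finset.mem_insert.1 ha with rfl | ha <;>
          rcases Finset.mem_insert.1 hb with rfl | hb
        · exact absurd rfl hab
        · rw [abs_sub_comm]; exact key b hb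
        · exact key a ha
        · exact hsep a ha b hb hab
      · have hsplit : S.card ≤ S'.card + d := by
          have : (S \ S') ⊆ Finset.Icc m (m + d - 1) := by
            intro x hx
            obtain ⟨hx1, hx2⟩ := Finset.mem_sdiff.1 hx
            have hge : m ≤ x := S.min'_le x hx1
            have hlt : ¬ (m + d ≤ x) := fun h => hx2 (Finset.mem_filter.2 ⟨hx1, h⟩)
            simp only [Finset.mem_Icc]; omega
          have h1 : (S \ S').card ≤ d := by
            calc (S \ S').card ≤ (Finset.Icc m (m + d - 1)).card :=
                  Finset.card_le_card this
              _ = d := by rw [Nat.card_Icc]; omega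
          have h2 := Finset.card_sdiff_add_card_eq_card (show S' ⊆ S from hsub.subset)
          omega
        rw [Finset.card_insert_of_notMem hmA']
        calc S.card ≤ S'.card + d := hsplit
          _ ≤ d * A'.card + d := by omega
          _ = d * (A'.card + 1) := by ring

/-- Single service with blocking delay `d ≥ 1` and forbidden slots `C ⊆ {1,…,T}`:
there is a schedule (a set of slots in `{1,…,T} \ C` any two of which differ by at
least `d`) of size at least `⌈(T − |C|)/d⌉`. -/
theorem stmt4 (T d : ℕ) (hd : 1 ≤ d) (C : Finset ℕ) (hC : C ⊆ Finset.Icc 1 T) :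
    ∃ A : Finset ℕ, A ⊆ Finset.Icc 1 T \ C ∧
      (∀ a ∈ A, ∀ b ∈ A, a ≠ b → (d : ℤ) ≤ |(a : ℤ) - (b : ℤ)|) ∧
      ⌈((T : ℝ) - C.card) / d⌉₊ ≤ A.card := by
  obtain ⟨A, hAS, hsep, hcard⟩ := sep_subset d hd (Finset.Icc 1 T \ C)
  refine ⟨A, hAS, hsep, ?_⟩
  have hScard : (Finset.Icc 1 T \ C).card = T - C.card := by
    rw [Finset.card_sdiff_of_subset hC, Nat.card_Icc]; omega
  have hCT : C.card ≤ T := by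
    have := Finset.card_le_card hC
    rwa [Nat.card_Icc, Nat.add_sub_cancel] at this
  rw [Nat.ceil_le]
  rw [div_le_iff₀ (by positivity : (0:ℝ) < d)]
  have h : T - C.card ≤ d * A.card := hScard ▸ hcard
  have h1 : ((T - C.card : ℕ) : ℝ) ≤ ((d * A.card : ℕ) : ℝ) := by exact_mod_cast h
  rw [Nat.cast_sub hCT] at h1
  push_cast at h1 ⊢
  linarith
end

section
/- Let d_1,…,d_S ≥ 1 be reals and T > 0, and define the greedy counts n'_s = (T/d_s)·∏_{r=1}^{s−1}(1 − 1/d_r). If additionally ∑_{s=1}^{S} 1/d_s ≥ 1, then ∑_{s=1}^{S} n'_s · μ_s ≥ (1 − 1/e)·∑_{s=1}^{S} n*_s · μ_s for any nonincreasing values μ_1 ≥ … ≥ μ_S ≥ 0, where n*_s is the optimal fractional bounded knapsack solution with per-item bounds T/d_s and total budget T. -/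
open Finset

/-- Abel-summation style auxiliary bound. -/
lemma stmt6_abel_aux (f g : ℕ → ℝ)
    (hfmono : ∀ i j, i ≤ j → f j ≤ f i)
    (hg : ∀ k, ∑ s ∈ Finset.range k, g s ≤ 0) :
    ∀ n, ∑ i ∈ Finset.range n, f i * g i - f n * ∑ i ∈ Finset.range n, g i ≤ 0 := by
  intro n
  induction n with
  | zero => simp
  | succ n ih =>
    have h1 : f (n + 1) ≤ f n := hfmono n (n + 1) (Nat.le_succ n)
    have h2 := hg (n + 1)
    rw [Finset.sum_range_succ] at h2
    rw [Finset.sum_range_succ, Finset.sum_range_succ]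
    have h3 : (f n - f (n + 1)) * (∑ s ∈ Finset.range n, g s + g n) ≤ 0 :=
      mul_nonpos_of_nonneg_of_nonpos (sub_nonneg.2 h1) h2
    nlinarith

lemma stmt6_abel (f g : ℕ → ℝ) (hf0 : ∀ i, 0 ≤ f i)
    (hfmono : ∀ i j, i ≤ j → f j ≤ f i)
    (hg : ∀ k, ∑ s ∈ Finset.range k, g s ≤ 0) (n : ℕ) :
    ∑ i ∈ Finset.range n, f i * g i ≤ 0 := by
  have h1 := stmt6_abel_aux f g hfmono hg n
  have h2 : f n * ∑ i ∈ Finset.range n, g i ≤ 0 :=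
    mul_nonpos_of_nonneg_of_nonpos (hf0 n) (hg n)
  linarith

/-- With delays `d_s ≥ 1`, horizon `T > 0`, total rate `∑ 1/d_s ≥ 1`, greedy counts
`n'_s = (T/d_s) ∏_{r<s} (1 − 1/d_r)` and optimal fractional bounded knapsack solution
`n*_s = min {T/d_s, (T − ∑_{r<s} n*_r)⁺}`, the greedy value is at least a `(1 − 1/e)`
fraction of the optimal value for any nonincreasing nonnegative values `μ`. -/
theorem stmt6 (S : ℕ) (d : ℕ → ℝ) (hd : ∀ s, 1 ≤ d s) (T : ℝ) (hT : 0 < T)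
    (hsum : 1 ≤ ∑ s ∈ Finset.range S, 1 / d s)
    (μ : ℕ → ℝ) (hμ0 : ∀ s, 0 ≤ μ s) (hμmono : ∀ r s, r ≤ s → μ s ≤ μ r)
    (nstar : ℕ → ℝ)
    (hstar : ∀ s, nstar s =
      min (T / d s) (max (T - ∑ r ∈ Finset.range s, nstar r) 0)) :
    (1 - 1 / Real.exp 1) * ∑ s ∈ Finset.range S, nstar s * μ s ≤
      ∑ s ∈ Finset.range S, (T / d s * ∏ r ∈ Finset.range s, (1 - 1 / d r)) * μ s := by
  set c : ℝ := 1 - 1 / Real.exp 1 with hc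
  have hdpos : ∀ s, 0 < d s := fun s => lt_of_lt_of_le one_pos (hd s)
  have hTd : ∀ s, 0 ≤ T / d s := fun s => div_nonneg hT.le (hdpos s).le
  have hinv0 : ∀ s, 0 ≤ 1 / d s := fun s => div_nonneg one_pos.le (hdpos s).le
  have hinv1 : ∀ s, 1 / d s ≤ 1 := fun s => div_le_one_of_le₀ (hd s) (hdpos s).le
  have hcpos : 0 ≤ c := by
    have : 1 / Real.exp 1 ≤ 1 := by
      rw [div_le_one (Real.exp_pos 1)]
      linarith [Real.add_one_le_exp 1]
    rw [hc]; linarith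
  -- nstar is nonneg, bounded per coordinate, with partial sums ≤ T
  have hns0 : ∀ s, 0 ≤ nstar s := by
    intro s; rw [hstar s]
    exact le_min (hTd s) (le_max_right _ _)
  have hNT : ∀ k, ∑ s ∈ Finset.range k, nstar s ≤ T := by
    intro k
    induction k with
    | zero => simpa using hT.le
    | succ k ih =>
      rw [Finset.sum_range_succ]
      have : nstar k ≤ T - ∑ s ∈ Finset.range k, nstar s := by
        rw [hstar k]
        exact le_trans (min_le_right _ _) (max_le le_rfl (by linarith))
      linarith
  have hNR : ∀ k, ∑ s ∈ Finset.range k, nstar s ≤ T * ∑ s ∈ Finset.range k, 1 / d s := by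
    intro k
    rw [Finset.mul_sum]
    refine Finset.sum_le_sum fun s _ => ?_
    rw [hstar s]
    calc min (T / d s) _ ≤ T / d s := min_le_left _ _
      _ = T * (1 / d s) := by ring
  -- greedy partial sums
  have hprod0 : ∀ k, 0 ≤ ∏ r ∈ Finset.range k, (1 - 1 / d r) :=
    fun k => Finset.prod_nonneg fun r _ => by linarith [hinv1 r]
  have hG : ∀ k, ∑ s ∈ Finset.range k, T / d s * ∏ r ∈ Finset.range s, (1 - 1 / d r)
      = T * (1 - ∏ r ∈ Finset.range k, (1 - 1 / d r)) := by
    intro k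
    induction k with
    | zero => simp
    | succ k ih =>
      rw [Finset.sum_range_succ, ih, Finset.prod_range_succ]
      have : d k ≠ 0 := (hdpos k).ne'
      field_simp
      ring
  -- product bounded by exp(-R)
  have hPexp : ∀ k, ∏ r ∈ Finset.range k, (1 - 1 / d r)
      ≤ Real.exp (-(∑ s ∈ Finset.range k, 1 / d s)) := by
    intro k
    induction k with
    | zero => simp
    | succ k ih =>
      rw [Finset.prod_range_succ, Finset.sum_range_succ, neg_add, Real.exp_add]
      have h1 : 1 - 1 / d k ≤ Real.exp (-(1 / d k)) := by
        have := Real.add_one_le_exp (-(1 / d k)); linarith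
      have h2 : (0:ℝ) ≤ 1 - 1 / d k := by linarith [hinv1 k]
      calc (∏ r ∈ Finset.range k, (1 - 1 / d r)) * (1 - 1 / d k)
          ≤ Real.exp (-(∑ s ∈ Finset.range k, 1 / d s)) * (1 - 1 / d k) :=
            mul_le_mul_of_nonneg_right ih h2
        _ ≤ _ := mul_le_mul_of_nonneg_left h1 (Real.exp_pos _).le
  -- key partial-sum inequality
  have hkey : ∀ k, ∑ s ∈ Finset.range k,
      (c * nstar s - T / d s * ∏ r ∈ Finset.range s, (1 - 1 / d r)) ≤ 0 := by
    intro k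
    rw [Finset.sum_sub_distrib, ← Finset.mul_sum, hG k]
    set R : ℝ := ∑ s ∈ Finset.range k, 1 / d s with hR
    set P : ℝ := ∏ r ∈ Finset.range k, (1 - 1 / d r) with hP
    have hR0 : 0 ≤ R := Finset.sum_nonneg fun s _ => hinv0 s
    have hPe : P ≤ Real.exp (-R) := hPexp k
    have hP0 : (0:ℝ) ≤ P := hprod0 k
    have hNk : ∑ s ∈ Finset.range k, nstar s ≤ T * R := hNR k
    rcases le_total 1 R with h1 | h1
    · -- R ≥ 1 : use exp(-R) ≤ exp(-1) = 1/e
      have he : Real.exp (-R) ≤ 1 / Real.exp 1 := by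
        rw [one_div, ← Real.exp_neg]
        exact Real.exp_le_exp.2 (by linarith)
      have hN := hNT k
      have h2 : c * ∑ s ∈ Finset.range k, nstar s ≤ c * T :=
        mul_le_mul_of_nonneg_left hN hcpos
      have hcT : c * T ≤ T * (1 - P) := by
        have : P ≤ 1 / Real.exp 1 := le_trans hPe he
        rw [hc]; nlinarith
      linarith
    · -- R ≤ 1 : convexity of exp
      have hconv : Real.exp (-R) ≤ (1 - R) + R * (1 / Real.exp 1) := by
        have h := convexOn_exp.2 (Set.mem_univ (0:ℝ)) (Set.mem_univ (-1:ℝ))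
          (by linarith : (0:ℝ) ≤ 1 - R) hR0 (by ring)
        simp only [smul_eq_mul, mul_zero, zero_add, mul_neg, mul_one, Real.exp_zero] at h
        rw [show Real.exp (-1) = 1 / Real.exp 1 from by
          rw [Real.exp_neg, one_div]] at h
        exact h
      have hcRP : c * (T * R) ≤ T * (1 - P) := by
        have hPle : P ≤ (1 - R) + R * (1 / Real.exp 1) := le_trans hPe hconv
        have : c * R ≤ 1 - P := by rw [hc]; nlinarith
        nlinarith
      have h2 := mul_le_mul_of_nonneg_left hNk hcpos
      linarith
  -- Abel summation
  have habel := stmt6_abel μ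
    (fun s => c * nstar s - T / d s * ∏ r ∈ Finset.range s, (1 - 1 / d r))
    hμ0 hμmono hkey S
  have heq : ∑ i ∈ Finset.range S,
      μ i * (c * nstar i - T / d i * ∏ r ∈ Finset.range i, (1 - 1 / d r))
      = c * (∑ s ∈ Finset.range S, nstar s * μ s)
        - ∑ s ∈ Finset.range S, (T / d s * ∏ r ∈ Finset.range s, (1 - 1 / d r)) * μ s := by
    rw [Finset.mul_sum, ← Finset.sum_sub_distrib]
    exact Finset.sum_congr rfl fun s _ => by ring
  rw [heq] at habel
  linarith
end

section
/- In the deterministic repeated serial dictatorship policy DRRSD with P groups, if each agent i is assigned its j-th favourite service in at least P/(2N) groups, each group has T/P rounds, and within a group the service can be matched at least ⌊T/(P·D_{i,i_j})⌋ times, then the total social welfare is at least (T/(4N))·∑_{i=1}^{N} ∑_{j=1}^{S} μ_{i,j}/D_{i,i_j}, provided T/(P·D_{i,i_j}) ≥ 2 for all i,j. -/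
/-- DRRSD welfare lower bound: if each agent `i` gets its `j`-th favourite service (with
reward `μ_{i,j}` and delay `D_{i,i_j}`) in at least `P/(2N)` of the `P` groups, matched
at least `⌊T/(P·D_{i,i_j})⌋` times within each such group, and `T/(P·D_{i,i_j}) ≥ 2`
for all `i,j`, then the total social welfare is at least
`(T/(4N)) ∑_i ∑_j μ_{i,j}/D_{i,i_j}`. -/
theorem stmt9 (N S P T : ℕ) (hN : 0 < N) (hP : 0 < P)
    (μ : Fin N → Fin S → ℝ) (hμ : ∀ i j, 0 ≤ μ i j)
    (D : Fin N → Fin S → ℝ) (hD : ∀ i j, 1 ≤ D i j)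
    (hT2 : ∀ i j, 2 ≤ (T : ℝ) / (P * D i j))
    (SW : ℝ)
    (hSW : ∑ i, ∑ j, μ i j * ((P : ℝ) / (2 * N)) * (⌊(T : ℝ) / (P * D i j)⌋ : ℝ) ≤ SW) :
    (T : ℝ) / (4 * N) * ∑ i, ∑ j, μ i j / D i j ≤ SW := by
  refine le_trans ?_ hSW
  rw [Finset.mul_sum]
  refine Finset.sum_le_sum fun i _ => ?_
  rw [Finset.mul_sum]
  refine Finset.sum_le_sum fun j _ => ?_
  have hNpos : (0:ℝ) < N := by exact_mod_cast hN
  have hPpos : (0:ℝ) < P := by exact_mod_cast hP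
  have hDpos : (0:ℝ) < D i j := lt_of_lt_of_le one_pos (hD i j)
  set x : ℝ := (T : ℝ) / (P * D i j) with hx
  have hfl : x / 2 ≤ (⌊x⌋ : ℝ) := by
    have h1 : x - 1 ≤ (⌊x⌋ : ℝ) := le_of_lt (Int.sub_one_lt_floor x)
    have := hT2 i j
    linarith
  have key : (T : ℝ) / (4 * N) * (μ i j / D i j) = μ i j * ((P : ℝ) / (2 * N)) * (x / 2) := by
    rw [hx]; field_simp; ring
  rw [key]
  exact mul_le_mul_of_nonneg_left hfl (mul_nonneg (hμ i j) (by positivity))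
end

section
/- For any assignment counts A_{i,j} satisfying A_{i,j} ≤ T/D_{i,i_j} (imposed by blocking), the total welfare ∑_{i=1}^{N} ∑_{j=1}^{S} μ_{i,j}·A_{i,j} is at most T·∑_{i=1}^{N} ∑_{j=1}^{S} μ_{i,j}/D_{i,i_j}. Combining with the DRRSD lower bound of (T/(4N))·∑_{i,j} μ_{i,j}/D_{i,i_j}, the distortion of DRRSD is at most 4N. -/
/-- Any assignment counts `A_{i,j} ≤ T/D_{i,i_j}` yield total welfare at most
`T ∑_{i,j} μ_{i,j}/D_{i,i_j}`; combined with the DRRSD lower bound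
`(T/(4N)) ∑_{i,j} μ_{i,j}/D_{i,i_j}`, the distortion of DRRSD is at most `4N`. -/
theorem stmt10 (N S T : ℕ) (hN : 0 < N)
    (μ : Fin N → Fin S → ℝ) (hμ : ∀ i j, 0 ≤ μ i j)
    (D : Fin N → Fin S → ℝ) (hD : ∀ i j, 1 ≤ D i j)
    (A : Fin N → Fin S → ℝ) (hA0 : ∀ i j, 0 ≤ A i j)
    (hA : ∀ i j, A i j ≤ (T : ℝ) / D i j)
    (SWpolicy : ℝ)
    (hpolicy : (T : ℝ) / (4 * N) * ∑ i, ∑ j, μ i j / D i j ≤ SWpolicy) :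
    (∑ i, ∑ j, μ i j * A i j ≤ (T : ℝ) * ∑ i, ∑ j, μ i j / D i j) ∧
      ∑ i, ∑ j, μ i j * A i j ≤ 4 * (N : ℝ) * SWpolicy := by
  have h1 : ∑ i, ∑ j, μ i j * A i j ≤ (T : ℝ) * ∑ i, ∑ j, μ i j / D i j := by
    rw [Finset.mul_sum]
    refine Finset.sum_le_sum fun i _ => ?_
    rw [Finset.mul_sum]
    refine Finset.sum_le_sum fun j _ => ?_
    have := mul_le_mul_of_nonneg_left (hA i j) (hμ i j)
    calc μ i j * A i j ≤ μ i j * ((T : ℝ) / D i j) := this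
      _ = (T : ℝ) * (μ i j / D i j) := by ring
  refine ⟨h1, h1.trans ?_⟩
  have hNpos : (0 : ℝ) < N := by exact_mod_cast hN
  have := mul_le_mul_of_nonneg_left hpolicy (by positivity : (0:ℝ) ≤ 4 * N)
  calc (T : ℝ) * ∑ i, ∑ j, μ i j / D i j
      = 4 * N * ((T : ℝ) / (4 * N) * ∑ i, ∑ j, μ i j / D i j) := by
        field_simp
    _ ≤ 4 * N * SWpolicy := this
end

section
/- With N agents (N a perfect square) and uniform blocking delay D, the fixed deterministic allocation that assigns service i to agent i every D rounds for i = 1,…,√N achieves social welfare at least √N·(T/D)·(1 − 1/(10ND)). Combined with the O(T/D) upper bound on the welfare of any anonymous randomized mechanism on the adversarial reward profile, the distortion of any randomized mechanism is Ω(√N). -/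
/-- Lower-bound construction for randomized mechanisms: with `N = K²` agents (`K = √N`)
and uniform blocking delay `D`, on the adversarial reward profile
(`μ_{i,j} = (N−j)/(10N³D)` for `j ≠ i` and `μ_{i,i} = 1 − ∑_{j≠i} μ_{i,j}` for the
first `√N` agents), the fixed deterministic allocation assigning service `i` to agent
`i` every `D` rounds (i.e. `⌈T/D⌉` times) achieves social welfare at least
`√N (T/D) (1 − 1/(10ND))`.  Combined with an `O(T/D)` upper bound (`SWmech ≤ c·T/D`)
on the welfare of any anonymous randomized mechanism on this profile, the distortion is
at least `(√N/c)(1 − 1/(10ND)) = Ω(√N)`. -/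
theorem stmt13 (N K T D : ℕ) (hN : N = K ^ 2) (hK : 1 ≤ K) (hD : 1 ≤ D) (hT : 1 ≤ T)
    (μ : Fin N → Fin N → ℝ)
    (hμoff : ∀ i j : Fin N, (i : ℕ) < K → i ≠ j →
      μ i j = ((N : ℝ) - ((j : ℕ) + 1)) / (10 * N ^ 3 * D))
    (hμdiag : ∀ i : Fin N, (i : ℕ) < K →
      μ i i = 1 - ∑ j ∈ Finset.univ.erase i, μ i j)
    (SWfixed : ℝ)
    (hSWfixed : SWfixed =
      ∑ i ∈ Finset.univ.filter (fun i : Fin N => (i : ℕ) < K),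
        (⌈(T : ℝ) / D⌉ : ℝ) * μ i i) :
    (Real.sqrt N * ((T : ℝ) / D) * (1 - 1 / (10 * N * D)) ≤ SWfixed) ∧
      ∀ SWmech c : ℝ, 0 < SWmech → 0 < c → SWmech ≤ c * ((T : ℝ) / D) →
        (Real.sqrt N / c) * (1 - 1 / (10 * N * D)) ≤ SWfixed / SWmech := by
  have hN1 : 1 ≤ N := by nlinarith
  have hKN : K ≤ N := by nlinarith
  have hNR : (1:ℝ) ≤ N := by exact_mod_cast hN1
  have hDR : (1:ℝ) ≤ D := by exact_mod_cast hD
  have hNpos : (0:ℝ) < N := by linarith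
  have hDpos : (0:ℝ) < D := by linarith
  have hTpos : (0:ℝ) < T := by exact_mod_cast hT
  have hden : (0:ℝ) < 10 * (N:ℝ) ^ 3 * D := by positivity
  have hdenND : (0:ℝ) < 10 * (N:ℝ) * D := by positivity
  set m : ℝ := 1 - 1 / (10 * N * D) with hm
  have hm0 : 0 ≤ m := by
    have h1 : 1 / (10 * (N:ℝ) * D) ≤ 1 := by
      rw [div_le_one hdenND]; nlinarith
    simp only [hm]; linarith
  have hμii : ∀ i : Fin N, (i:ℕ) < K → m ≤ μ i i := by
    intro i hi
    rw [hμdiag i hi]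
    have hb : ∀ j ∈ Finset.univ.erase i, μ i j ≤ (N:ℝ) / (10 * N ^ 3 * D) := by
      intro j hj
      have hji : i ≠ j := (Finset.ne_of_mem_erase hj).symm
      rw [hμoff i j hi hji]
      have hj0 : (0:ℝ) ≤ ((j:ℕ):ℝ) := by positivity
      gcongr
      · linarith
    have hS : ∑ j ∈ Finset.univ.erase i, μ i j ≤ 1 / (10 * N * D) := by
      calc ∑ j ∈ Finset.univ.erase i, μ i j
          ≤ (Finset.univ.erase i).card • ((N:ℝ) / (10 * N ^ 3 * D)) :=
            Finset.sum_le_card_nsmul _ _ _ hb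
        _ = ((Finset.univ.erase i).card : ℝ) * ((N:ℝ) / (10 * N ^ 3 * D)) := by
            rw [nsmul_eq_mul]
        _ ≤ (N:ℝ) * ((N:ℝ) / (10 * N ^ 3 * D)) := by
            apply mul_le_mul_of_nonneg_right _ (by positivity)
            have hc : (Finset.univ.erase i).card ≤ N := by
              calc (Finset.univ.erase i).card ≤ (Finset.univ : Finset (Fin N)).card :=
                    Finset.card_le_card (Finset.erase_subset _ _)
                _ = N := by simp
            exact_mod_cast hc
        _ = 1 / (10 * N * D) := by field_simp
    simp only [hm]; linarith
  have hcard : (Finset.univ.filter (fun i : Fin N => (i : ℕ) < K)).card = K := by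
    have himg : (Finset.univ.filter (fun i : Fin N => (i : ℕ) < K)) =
        Finset.univ.image (fun i : Fin K => (⟨(i:ℕ), lt_of_lt_of_le i.2 hKN⟩ : Fin N)) := by
      ext j
      simp only [Finset.mem_filter, Finset.mem_univ, true_and, Finset.mem_image]
      constructor
      · intro hj; exact ⟨⟨(j:ℕ), hj⟩, by simp⟩
      · rintro ⟨a, rfl⟩; exact a.2
    rw [himg, Finset.card_image_of_injective _ (fun a b hab => by
      injection hab with h; exact Fin.ext h)]
    simp
  have hceil : (T:ℝ) / D ≤ (⌈(T : ℝ) / D⌉ : ℝ) := Int.le_ceil _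
  have hceil0 : (0:ℝ) ≤ (⌈(T : ℝ) / D⌉ : ℝ) := le_trans (by positivity) hceil
  have hpart1 : Real.sqrt N * ((T : ℝ) / D) * m ≤ SWfixed := by
    have hsqrt : Real.sqrt N = K := by
      rw [hN]; push_cast; exact Real.sqrt_sq (by positivity)
    have hsum : (K:ℝ) * ((⌈(T : ℝ) / D⌉ : ℝ) * m) ≤ SWfixed := by
      rw [hSWfixed]
      calc (K:ℝ) * ((⌈(T : ℝ) / D⌉ : ℝ) * m)
          = (Finset.univ.filter (fun i : Fin N => (i : ℕ) < K)).card •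
              ((⌈(T : ℝ) / D⌉ : ℝ) * m) := by rw [hcard, nsmul_eq_mul]
        _ ≤ ∑ i ∈ Finset.univ.filter (fun i : Fin N => (i : ℕ) < K),
              (⌈(T : ℝ) / D⌉ : ℝ) * μ i i := by
            apply Finset.card_nsmul_le_sum
            intro i hi
            have hiK : (i:ℕ) < K := (Finset.mem_filter.mp hi).2
            exact mul_le_mul_of_nonneg_left (hμii i hiK) hceil0
    rw [hsqrt]
    calc (K:ℝ) * ((T : ℝ) / D) * m ≤ (K:ℝ) * ((⌈(T : ℝ) / D⌉ : ℝ) * m) := by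
          rw [mul_assoc]
          apply mul_le_mul_of_nonneg_left _ (by positivity)
          exact mul_le_mul_of_nonneg_right hceil hm0
      _ ≤ SWfixed := hsum
  refine ⟨hpart1, ?_⟩
  intro SWmech c hSW hc hub
  have hTD : (0:ℝ) < (T:ℝ)/D := by positivity
  have heq : (Real.sqrt N / c) * m = (Real.sqrt N * ((T : ℝ) / D) * m) / (c * ((T : ℝ) / D)) := by
    field_simp
  rw [heq]
  have hfix0 : (0:ℝ) ≤ SWfixed := le_trans (by positivity) hpart1
  exact div_le_div₀ hfix0 hpart1 hSW hub
end

section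
/- In the lower-bound construction for deterministic policies with N agents and N identical-preference services each with blocking delay D̃, for any matching sequence one can iteratively find agents i_1,…,i_N such that, after discarding i_1,…,i_{k−1}, agent i_k is assigned one of services 1,…,k at most T/(D̃·(N−k+1)) times (by the pigeonhole principle). -/
/-- Pigeonhole step in the deterministic lower bound: with `N` agents and `N` services
each allocatable at most `T/D̃` times in total, for any allocation counts `A` one can
order the agents as `i_1, …, i_N` (a permutation `e`, with `i_k = e k` in 0-indexed
form) such that, after discarding `i_1, …, i_{k−1}`, agent `i_k` is assigned services
`1, …, k` at most `k · T/(D̃ (N − k + 1))` times in total. -/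
theorem stmt16 (N : ℕ) (hN : 0 < N) (T Dt : ℝ) (hD : 0 < Dt) (hT : 0 ≤ T)
    (A : Fin N → Fin N → ℝ) (hA0 : ∀ i j, 0 ≤ A i j)
    (hcap : ∀ j, ∑ i, A i j ≤ T / Dt) :
    ∃ e : Equiv.Perm (Fin N), ∀ k : Fin N,
      ∑ j ∈ Finset.univ.filter (fun j : Fin N => (j : ℕ) ≤ (k : ℕ)), A (e k) j ≤
        (((k : ℕ) : ℝ) + 1) * T / (Dt * ((N : ℝ) - (k : ℕ))) := by
  classical
  set f : ℕ → Fin N → ℝ :=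
    fun k i => ∑ j ∈ Finset.univ.filter (fun j : Fin N => (j : ℕ) ≤ k), A i j with hf
  have hfnn : ∀ k i, 0 ≤ f k i := fun k i => Finset.sum_nonneg fun j _ => hA0 i j
  have htot : ∀ k : ℕ, ∑ i, f k i ≤ ((k : ℝ) + 1) * (T / Dt) := by
    intro k
    have hcard : (Finset.univ.filter (fun j : Fin N => (j : ℕ) ≤ k)).card ≤ k + 1 := by
      have := Finset.card_le_card_of_injOn
        (s := Finset.univ.filter (fun j : Fin N => (j : ℕ) ≤ k)) (t := Finset.range (k + 1))
        (fun j : Fin N => (j : ℕ))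
        (fun j hj => Finset.mem_range.mpr (Nat.lt_succ_of_le (Finset.mem_filter.mp hj).2))
        (fun a _ b _ h => Fin.val_injective h)
      simpa using this
    calc ∑ i, f k i
        = ∑ j ∈ Finset.univ.filter (fun j : Fin N => (j : ℕ) ≤ k), ∑ i, A i j :=
          Finset.sum_comm
      _ ≤ ∑ _j ∈ Finset.univ.filter (fun j : Fin N => (j : ℕ) ≤ k), T / Dt :=
          Finset.sum_le_sum fun j _ => hcap j
      _ = ((Finset.univ.filter (fun j : Fin N => (j : ℕ) ≤ k)).card : ℝ) * (T / Dt) := by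
          rw [Finset.sum_const, nsmul_eq_mul]
      _ ≤ ((k : ℝ) + 1) * (T / Dt) := by
          apply mul_le_mul_of_nonneg_right _ (div_nonneg hT hD.le)
          exact_mod_cast hcard
  have main : ∀ m, m ≤ N → ∃ l : List (Fin N), l.length = m ∧ l.Nodup ∧
      ∀ k (hk : k < l.length),
        f k (l.get ⟨k, hk⟩) ≤ ((k : ℝ) + 1) * T / (Dt * ((N : ℝ) - k)) := by
    intro m
    induction m with
    | zero => exact fun _ => ⟨[], rfl, List.nodup_nil, fun k hk => absurd hk (by simp)⟩
    | succ m ih =>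
      intro hm
      obtain ⟨l, hlen, hnd, hbd⟩ := ih (Nat.le_of_succ_le hm)
      have hcardl : l.toFinset.card = m := by
        rw [List.toFinset_card_of_nodup hnd, hlen]
      have hscard : (Finset.univ \ l.toFinset).card = N - m := by
        rw [Finset.card_sdiff_of_subset (Finset.subset_univ _), hcardl, Finset.card_univ, Fintype.card_fin]
      have hs : (Finset.univ \ l.toFinset).Nonempty := by
        rw [← Finset.card_pos, hscard]
        omega
      obtain ⟨a, has, hmin⟩ := Finset.exists_min_image _ (f m) hs
      have hanotin : a ∉ l := by
        rw [Finset.mem_sdiff] at has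
        simpa using has.2
      have hNm : (0 : ℝ) < (N : ℝ) - m := by
        have : m < N := hm
        have : (m : ℝ) < N := by exact_mod_cast this
        linarith
      have hacast : ((N - m : ℕ) : ℝ) = (N : ℝ) - m := by
        rw [Nat.cast_sub (Nat.le_of_succ_le hm)]
      have hkey : ((N : ℝ) - m) * f m a ≤ ((m : ℝ) + 1) * (T / Dt) := by
        have h1 : (Finset.univ \ l.toFinset).card • f m a ≤ ∑ b ∈ Finset.univ \ l.toFinset, f m b :=
          Finset.card_nsmul_le_sum _ _ _ hmin
        have h2 : ∑ b ∈ Finset.univ \ l.toFinset, f m b ≤ ∑ b, f m b :=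
          Finset.sum_le_sum_of_subset_of_nonneg (Finset.subset_univ _)
            (fun b _ _ => hfnn m b)
        have := le_trans h1 (le_trans h2 (htot m))
        rw [hscard, nsmul_eq_mul, hacast] at this
        exact this
      have habd : f m a ≤ ((m : ℝ) + 1) * T / (Dt * ((N : ℝ) - m)) := by
        rw [le_div_iff₀ (by positivity)]
        calc f m a * (Dt * ((N : ℝ) - m)) = (((N : ℝ) - m) * f m a) * Dt := by ring
          _ ≤ (((m : ℝ) + 1) * (T / Dt)) * Dt := by
              apply mul_le_mul_of_nonneg_right hkey hD.le
          _ = ((m : ℝ) + 1) * T := by field_simp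
      refine ⟨l ++ [a], by simp [hlen], ?_, ?_⟩
      · rw [List.nodup_append]
        exact ⟨hnd, List.nodup_singleton a, by simpa using fun b hb (h : b = a) => hanotin (h ▸ hb)⟩
      · intro k hk
        simp only [List.length_append, List.length_singleton, hlen] at hk
        rcases lt_or_eq_of_le (Nat.lt_succ_iff.mp hk) with h | h
        · have hget : (l ++ [a]).get ⟨k, by simpa [hlen] using hk⟩ = l.get ⟨k, hlen ▸ h⟩ := by
            simp [List.getElem_append_left (hlen ▸ h : k < l.length)]
          rw [hget]
          exact hbd k _
        · subst h
          have hget : (l ++ [a]).get ⟨k, by simpa [hlen] using hk⟩ = a := by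
            have : (l ++ [a]).get ⟨l.length, by simp⟩ = a := by
              simp
            simpa [hlen] using this
          rw [hget]
          exact habd
  obtain ⟨l, hlen, hnd, hbd⟩ := main N le_rfl
  have hinj : Function.Injective fun k : Fin N => l.get (Fin.cast hlen.symm k) := by
    intro x y hxy
    have := List.nodup_iff_injective_get.mp hnd hxy
    exact Fin.cast_injective _ this
  refine ⟨Equiv.ofBijective _ ((Fintype.bijective_iff_injective_and_card _).mpr
    ⟨hinj, rfl⟩), ?_⟩
  intro k
  have := hbd (k : ℕ) (by rw [hlen]; exact k.isLt)
  simpa [Equiv.ofBijective, Fin.cast, hf] using this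
end
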